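/- arXiv:2102.13232 — 3 statements merged into one kernel-verified Lean document; each statement's English description precedes it below -/
import Mathlib

section
/- Let V be a symmetric positive definite (m×m) real matrix, U a (p×m) matrix of full row rank p, and C an m-vector satisfying U V⁻¹ C = 0 and CᵀV⁻¹C > 0. Let C* be an m×(m−p−1) matrix whose columns form a basis of the orthogonal complement (with respect to the inner product ⟨a,b⟩ = aᵀV⁻¹b) of the span of C and the rows of U. Then V = C*(C*ᵀV⁻¹C*)⁻¹C*ᵀ + C(CᵀV⁻¹C)⁻¹Cᵀ + Uᵀ(UV⁻¹Uᵀ)⁻¹U. -/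
/-!
Put `W = [C* | C | Uᵀ]`, square since `(m - p - 1) + 1 + p = m`. Its Gram matrix
`G = Wᵀ V⁻¹ W` is block diagonal with invertible blocks, so `G⁻¹ Wᵀ V⁻¹` is a left inverse of
`W`, hence also a right inverse, which says `W G⁻¹ Wᵀ = V`. Expanding `W G⁻¹ Wᵀ` blockwise
gives the three terms.
-/

open Matrix

namespace Matrix

variable {R : Type*} [CommRing R] {n α β : Type*}

theorem mulVec_injective_of_rank_eq [Nontrivial R] [Fintype α] {A : Matrix n α R}
    (hA : A.rank = Fintype.card α) : Function.Injective A.mulVec := by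
  rw [mulVec_injective_iff, linearIndependent_iff_card_eq_finrank_span, Set.finrank,
    ← rank_eq_finrank_span_cols, hA]

theorem PosDef.isUnit_transpose_mul_mul_of_rank_eq [Fintype n] [DecidableEq n] [Fintype α]
    [DecidableEq α] {M : Matrix n n ℝ} (hM : M.PosDef) {A : Matrix n α ℝ}
    (hA : A.rank = Fintype.card α) : IsUnit (Aᵀ * M * A) := by
  simpa only [conjTranspose_eq_transpose_of_trivial] using
    (hM.conjTranspose_mul_mul_same (mulVec_injective_of_rank_eq hA)).isUnit

theorem mul_inv_transpose_mul_mul_mul_transpose [Fintype n] [DecidableEq n] [Fintype α]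
    [DecidableEq α] (hcard : Fintype.card α = Fintype.card n) (M : Matrix n n R)
    (W : Matrix n α R) (hW : IsUnit (Wᵀ * M * W)) :
    W * (Wᵀ * M * W)⁻¹ * Wᵀ = M⁻¹ := by
  have hleft : ((Wᵀ * M * W)⁻¹ * Wᵀ * M) * W = 1 := by
    simpa only [Matrix.mul_assoc] using nonsing_inv_mul _ ((isUnit_iff_isUnit_det _).mp hW)
  have hright : W * ((Wᵀ * M * W)⁻¹ * Wᵀ * M) = 1 :=
    (mul_eq_one_comm_of_card_eq _ _ _ hcard).mp hleft
  exact (inv_eq_left_inv (by simpa only [Matrix.mul_assoc] using hright)).symm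

section Orthogonal

variable [Fintype n] {M : Matrix n n R} {A : Matrix n α R} {B : Matrix n β R}

theorem transpose_fromCols_mul_mul_fromCols_of_orthogonal (hM : M.IsSymm)
    (hAB : Aᵀ * M * B = 0) :
    (fromCols A B)ᵀ * M * fromCols A B = fromBlocks (Aᵀ * M * A) 0 0 (Bᵀ * M * B) := by
  have hBA : Bᵀ * M * A = 0 := by
    simpa only [transpose_mul, transpose_transpose, hM.eq, Matrix.mul_assoc, transpose_zero]
      using congrArg transpose hAB
  rw [transpose_fromCols, fromRows_mul, fromRows_mul_fromCols, hAB, hBA]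

variable [Fintype α] [DecidableEq α] [Fintype β] [DecidableEq β]

theorem isUnit_transpose_fromCols_mul_mul_fromCols_of_orthogonal (hM : M.IsSymm)
    (hAB : Aᵀ * M * B = 0) (hA : IsUnit (Aᵀ * M * A)) (hB : IsUnit (Bᵀ * M * B)) :
    IsUnit ((fromCols A B)ᵀ * M * fromCols A B) := by
  rw [transpose_fromCols_mul_mul_fromCols_of_orthogonal hM hAB]
  exact isUnit_fromBlocks_zero₂₁.mpr ⟨hA, hB⟩

theorem fromCols_mul_inv_mul_transpose_of_orthogonal (hM : M.IsSymm)
    (hAB : Aᵀ * M * B = 0) (hA : IsUnit (Aᵀ * M * A)) (hB : IsUnit (Bᵀ * M * B)) :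
    fromCols A B * ((fromCols A B)ᵀ * M * fromCols A B)⁻¹ * (fromCols A B)ᵀ
      = A * (Aᵀ * M * A)⁻¹ * Aᵀ + B * (Bᵀ * M * B)⁻¹ * Bᵀ := by
  rw [transpose_fromCols_mul_mul_fromCols_of_orthogonal hM hAB,
    inv_fromBlocks_zero₂₁_of_isUnit_iff _ _ _ (iff_of_true hA hB), transpose_fromCols,
    Matrix.mul_zero, Matrix.zero_mul, neg_zero, fromCols_mul_fromBlocks, fromCols_mul_fromRows]
  simp only [Matrix.mul_zero, add_zero, zero_add]

end Orthogonal

end Matrix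

/-- Decomposition of a symmetric positive definite matrix `V` along
the `V⁻¹`-orthogonal directions spanned by `C`, the rows of `U`, and a basis `C*`
of the `V⁻¹`-orthogonal complement:
`V = C*(C*ᵀV⁻¹C*)⁻¹C*ᵀ + C(CᵀV⁻¹C)⁻¹Cᵀ + Uᵀ(UV⁻¹Uᵀ)⁻¹U`. -/
theorem posdef_orthogonal_decomposition
    (m p : ℕ) (hpm : p + 1 ≤ m)
    (V : Matrix (Fin m) (Fin m) ℝ) (hV : V.PosDef)
    (U : Matrix (Fin p) (Fin m) ℝ) (hU : U.rank = p)
    (C : Matrix (Fin m) (Fin 1) ℝ)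
    (hUC : U * V⁻¹ * C = 0)
    (hCpos : 0 < (Cᵀ * V⁻¹ * C) 0 0)
    (Cstar : Matrix (Fin m) (Fin (m - p - 1)) ℝ)
    (hCstarRank : Cstar.rank = m - p - 1)
    (hCstarC : Cstarᵀ * V⁻¹ * C = 0)
    (hCstarU : Cstarᵀ * V⁻¹ * Uᵀ = 0) :
    V = Cstar * (Cstarᵀ * V⁻¹ * Cstar)⁻¹ * Cstarᵀ
        + C * (Cᵀ * V⁻¹ * C)⁻¹ * Cᵀ
        + Uᵀ * (U * V⁻¹ * Uᵀ)⁻¹ * U := by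
  have hsymm : V⁻¹.IsSymm := (isSymm_conjTranspose_iff.mp (congrArg transpose hV.1)).inv
  have hCstar : IsUnit (Cstarᵀ * V⁻¹ * Cstar) :=
    hV.inv.isUnit_transpose_mul_mul_of_rank_eq (by simpa using hCstarRank)
  have hUt : IsUnit ((Uᵀ)ᵀ * V⁻¹ * Uᵀ) :=
    hV.inv.isUnit_transpose_mul_mul_of_rank_eq (by simpa [rank_transpose] using hU)
  have hC : IsUnit (Cᵀ * V⁻¹ * C) := by
    rw [isUnit_iff_isUnit_det, det_fin_one]
    exact hCpos.ne'.isUnit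
  have hCU_orth : Cᵀ * V⁻¹ * Uᵀ = 0 := by
    simpa only [transpose_mul, hsymm.eq, Matrix.mul_assoc, transpose_zero]
      using congrArg transpose hUC
  have hCstar_orth : Cstarᵀ * V⁻¹ * fromCols C Uᵀ = 0 := by
    rw [mul_fromCols, hCstarC, hCstarU, fromCols_zero]
  have hCU : IsUnit ((fromCols C Uᵀ)ᵀ * V⁻¹ * fromCols C Uᵀ) :=
    isUnit_transpose_fromCols_mul_mul_fromCols_of_orthogonal hsymm hCU_orth hC hUt
  have hcard : Fintype.card (Fin (m - p - 1) ⊕ (Fin 1 ⊕ Fin p)) = Fintype.card (Fin m) := by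
    simp only [Fintype.card_sum, Fintype.card_fin]
    omega
  calc V = V⁻¹⁻¹ := (nonsing_inv_nonsing_inv V ((isUnit_iff_isUnit_det V).mp hV.isUnit)).symm
    _ = _ := (mul_inv_transpose_mul_mul_mul_transpose hcard V⁻¹ (fromCols Cstar (fromCols C Uᵀ))
          (isUnit_transpose_fromCols_mul_mul_fromCols_of_orthogonal hsymm hCstar_orth hCstar hCU)).symm
    _ = _ := by
      rw [fromCols_mul_inv_mul_transpose_of_orthogonal hsymm hCstar_orth hCstar hCU,
        fromCols_mul_inv_mul_transpose_of_orthogonal hsymm hCU_orth hC hUt, transpose_transpose,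
        add_assoc]
end

section
/- Let V_m be symmetric positive definite partitioned as [[V_{m−1}, v],[vᵀ, c]], and let U_m = (U_{m−1}, u_m) where U_{m−1} consists of the first block of columns. Define J_m = U_m V_m⁻¹ U_mᵀ and J_{m−1} = U_{m−1} V_{m−1}⁻¹ U_{m−1}ᵀ. If both J_m and J_{m−1} are invertible, then J_m ≥ J_{m−1} in the Loewner order; consequently J_m⁻¹ ≤ J_{m−1}⁻¹. -/
/-!
Both inequalities are instances of one fact: for positive definite `X` and `Z`, the block matrix
`[[X, Y], [Yᴴ, Z]]` is positive semidefinite iff either of its Schur complements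
`Z - Yᴴ X⁻¹ Y`, `X - Y Z⁻¹ Yᴴ` is. Taking `X = V_m⁻¹`, `Z = V_{m-1}` and `Y` the inclusion of the
first `k` coordinates, the first complement vanishes, so `V_m⁻¹ ≥ Y V_{m-1}⁻¹ Yᵀ`; conjugating by
`U_m` gives `J_m ≥ J_{m-1}`. Taking `X = A`, `Z = B⁻¹`, `Y = 1` for `A ≥ B > 0` shows that
inversion reverses the Loewner order, which gives `J_m⁻¹ ≤ J_{m-1}⁻¹`.
-/

open Matrix

theorem Matrix.conjTranspose_submatrix_one_mul_mul {n o α : Type*} [Fintype o] [DecidableEq o]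
    [Semiring α] [StarRing α] (M : Matrix o o α) (f : n → o) :
    ((1 : Matrix o o α).submatrix id f)ᴴ * M * (1 : Matrix o o α).submatrix id f =
      M.submatrix f f := by
  ext i j
  simp [mul_apply, one_apply]

namespace Matrix.PosDef

variable {m n K : Type*} [Fintype m] [Fintype n] [DecidableEq m] [DecidableEq n]
  [Field K] [PartialOrder K] [StarRing K] [StarOrderedRing K]

theorem posSemidef_schur_iff {X : Matrix m m K} {Z : Matrix n n K} (hX : X.PosDef)
    (hZ : Z.PosDef) (Y : Matrix m n K) :
    (Z - Yᴴ * X⁻¹ * Y).PosSemidef ↔ (X - Y * Z⁻¹ * Yᴴ).PosSemidef := by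
  have := hX.isUnit.invertible
  have := hZ.isUnit.invertible
  rw [← hX.fromBlocks₁₁ Y Z, hZ.fromBlocks₂₂ X Y]

theorem posSemidef_inv_sub_inv {A B : Matrix n n K} (hB : B.PosDef)
    (hAB : (A - B).PosSemidef) : (B⁻¹ - A⁻¹).PosSemidef := by
  have hA : A.PosDef := by simpa using hB.add_posSemidef hAB
  have := hB.isUnit.invertible
  simpa using (posSemidef_schur_iff hA hB.inv 1).mpr (by simpa [inv_inv_of_invertible] using hAB)

theorem posSemidef_inv_sub_compression {M : Matrix m m K} (hM : M.PosDef) {Y : Matrix m n K}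
    (hY : (Yᴴ * M * Y).PosDef) : (M⁻¹ - Y * (Yᴴ * M * Y)⁻¹ * Yᴴ).PosSemidef := by
  have := hM.isUnit.invertible
  refine (posSemidef_schur_iff hM.inv hY Y).mp ?_
  simpa [inv_inv_of_invertible] using (PosSemidef.zero : (0 : Matrix n n K).PosSemidef)

end Matrix.PosDef

theorem information_monotone_general
    (k p : ℕ)
    (V : Matrix (Fin k) (Fin k) ℝ) (hV : V.PosDef)
    (v : Fin k → ℝ) (c : ℝ)
    (Vm : Matrix (Fin k ⊕ Unit) (Fin k ⊕ Unit) ℝ)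
    (hVm : Vm = Matrix.fromBlocks V (Matrix.of fun i (_ : Unit) => v i)
      (Matrix.of fun (_ : Unit) j => v j) (Matrix.of fun (_ : Unit) (_ : Unit) => c))
    (hVmpd : Vm.PosDef)
    (Um : Matrix (Fin p) (Fin k ⊕ Unit) ℝ)
    (hJm1 : IsUnit ((Um.submatrix id Sum.inl) * V⁻¹ * (Um.submatrix id Sum.inl)ᵀ).det) :
    (Um * Vm⁻¹ * Umᵀ - (Um.submatrix id Sum.inl) * V⁻¹ * (Um.submatrix id Sum.inl)ᵀ).PosSemidef
      ∧ (((Um.submatrix id Sum.inl) * V⁻¹ * (Um.submatrix id Sum.inl)ᵀ)⁻¹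
          - (Um * Vm⁻¹ * Umᵀ)⁻¹).PosSemidef := by
  set U := Um.submatrix id Sum.inl
  set Y := (1 : Matrix (Fin k ⊕ Unit) (Fin k ⊕ Unit) ℝ).submatrix id Sum.inl
  have hUY : Um * Y = U := by simpa using mul_submatrix_one (Equiv.refl _) Sum.inl Um
  have hYVY : Yᴴ * Vm * Y = V := by
    rw [conjTranspose_submatrix_one_mul_mul, hVm]
    rfl
  have hJ : (Um * Vm⁻¹ * Umᵀ - U * V⁻¹ * Uᵀ).PosSemidef := by
    have := (hVmpd.posSemidef_inv_sub_compression (hYVY ▸ hV)).mul_mul_conjTranspose_same Um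
    rw [hYVY] at this
    simpa only [← hUY, Matrix.mul_sub, Matrix.sub_mul, conjTranspose_eq_transpose_of_trivial,
      transpose_mul, Matrix.mul_assoc] using this
  have hJm1pd : (U * V⁻¹ * Uᵀ).PosDef := by
    refine (PosSemidef.posDef_iff_isUnit ?_).mpr ((isUnit_iff_isUnit_det _).mpr hJm1)
    simpa using hV.inv.posSemidef.mul_mul_conjTranspose_same U
  exact ⟨hJ, hJm1pd.posSemidef_inv_sub_inv hJ⟩

/-- With `V_m = [[V_{m−1}, v],[vᵀ, c]]` symmetric positive definite,
`U_m = (U_{m−1}, u_m)`, `J_m = U_m V_m⁻¹ U_mᵀ`, `J_{m−1} = U_{m−1} V_{m−1}⁻¹ U_{m−1}ᵀ`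
both invertible, one has `J_m ≥ J_{m−1}` and hence `J_m⁻¹ ≤ J_{m−1}⁻¹` in the
Loewner order: adding an estimating equation cannot increase the asymptotic
variance. -/
theorem information_monotone
    (k p : ℕ)
    (V : Matrix (Fin k) (Fin k) ℝ) (hV : V.PosDef)
    (v : Fin k → ℝ) (c : ℝ)
    (Vm : Matrix (Fin k ⊕ Unit) (Fin k ⊕ Unit) ℝ)
    (hVm : Vm = Matrix.fromBlocks V (Matrix.of fun i (_ : Unit) => v i)
      (Matrix.of fun (_ : Unit) j => v j) (Matrix.of fun (_ : Unit) (_ : Unit) => c))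
    (hVmpd : Vm.PosDef)
    (Um : Matrix (Fin p) (Fin k ⊕ Unit) ℝ)
    (hJm : IsUnit (Um * Vm⁻¹ * Umᵀ).det)
    (hJm1 : IsUnit ((Um.submatrix id Sum.inl) * V⁻¹ * (Um.submatrix id Sum.inl)ᵀ).det) :
    (Um * Vm⁻¹ * Umᵀ - (Um.submatrix id Sum.inl) * V⁻¹ * (Um.submatrix id Sum.inl)ᵀ).PosSemidef
      ∧ (((Um.submatrix id Sum.inl) * V⁻¹ * (Um.submatrix id Sum.inl)ᵀ)⁻¹
          - (Um * Vm⁻¹ * Umᵀ)⁻¹).PosSemidef :=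
  information_monotone_general k p V hV v c Vm hVm hVmpd Um hJm1
end

section
/- Let V_m be symmetric positive definite partitioned as [[V_{m−1}, v],[vᵀ, c]] and U_m = (U_{m−1}, u_m) with J_m = U_m V_m⁻¹ U_mᵀ and J_{m−1} = U_{m−1} V_{m−1}⁻¹ U_{m−1}ᵀ both invertible. Then V_m⁻¹(V_m − U_mᵀ J_m⁻¹ U_m)V_m⁻¹ ≥ [[V_{m−1}⁻¹(V_{m−1} − U_{m−1}ᵀ J_{m−1}⁻¹ U_{m−1})V_{m−1}⁻¹, 0],[0,0]] in the Loewner order. -/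
/-!
Write `P` for the left-hand side and `Q` for the padded matrix of the smaller model. Since
`P = Vm⁻¹ - Vm⁻¹ Umᵀ J⁻¹ Um Vm⁻¹` with `Um P = 0`, it is `Vm`-idempotent (`P Vm P = P`), and
likewise `Q Vm Q = Q`. The equations of the smaller model are among those of the larger one,
so `Um Q = 0` as well, which gives `P Vm Q = Q`.
Hence `M = P - Q` is symmetric with `M Vm M = M`, i.e. `M = Mᵀ Vm M`, which is positive
semidefinite.
-/

open Matrix

theorem sub_mul_mul_sub_eq_sub {α : Type*} [Ring α] {p q a : α} (hp : p * a * p = p)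
    (hq : q * a * q = q) (hpq : p * a * q = q) (hqp : q * a * p = q) :
    (p - q) * a * (p - q) = p - q := by
  simp only [sub_mul, mul_sub, hp, hq, hpq, hqp]
  abel

theorem Matrix.PosSemidef.of_isHermitian_of_mul_mul_self {n R : Type*} [Fintype n] [Ring R]
    [PartialOrder R] [StarRing R] [StarOrderedRing R] {A M : Matrix n n R} (hA : A.PosSemidef)
    (hM : M.IsHermitian) (h : M * A * M = M) : M.PosSemidef := by
  simpa only [hM.eq, h] using hA.conjTranspose_mul_mul_same M

namespace Matrix

section Blocks

variable {l m₁ m₂ n₁ n₂ R : Type*} [Fintype m₁] [Fintype m₂] [Semiring R]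

theorem mul_fromBlocks_zero (U : Matrix l (m₁ ⊕ m₂) R) (B : Matrix m₁ n₁ R) :
    U * fromBlocks B 0 0 (0 : Matrix m₂ n₂ R) = fromCols (U.toCols₁ * B) 0 := by
  rw [← fromCols_toCols U, fromCols_mul_fromBlocks]
  simp

theorem fromBlocks_zero_mul_fromBlocks_mul_fromBlocks_zero {l₁ l₂ o₁ o₂ : Type*} [Fintype n₁]
    [Fintype n₂] (B : Matrix l₁ m₁ R) (A₁₁ : Matrix m₁ n₁ R) (A₁₂ : Matrix m₁ n₂ R)
    (A₂₁ : Matrix m₂ n₁ R) (A₂₂ : Matrix m₂ n₂ R) (C : Matrix n₁ o₁ R) :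
    fromBlocks B 0 0 (0 : Matrix l₂ m₂ R) * fromBlocks A₁₁ A₁₂ A₂₁ A₂₂ *
        fromBlocks C 0 0 (0 : Matrix n₂ o₂ R) =
      fromBlocks (B * A₁₁ * C) 0 0 0 := by
  simp [fromBlocks_multiply]

end Blocks

section ResidualVariance

variable {l m n R : Type*} [Fintype m] [DecidableEq m] [Fintype n] [DecidableEq n] [CommRing R]
  {A : Matrix n n R} {U : Matrix m n R}

noncomputable def residualVariance (A : Matrix n n R) (U : Matrix m n R) : Matrix n n R :=
  A⁻¹ * (A - Uᵀ * (U * A⁻¹ * Uᵀ)⁻¹ * U) * A⁻¹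

theorem residualVariance_mul (hA : IsUnit A.det) :
    residualVariance A U * A = 1 - A⁻¹ * Uᵀ * (U * A⁻¹ * Uᵀ)⁻¹ * U := by
  rw [residualVariance, Matrix.mul_assoc _ A⁻¹, nonsing_inv_mul _ hA, Matrix.mul_one,
    Matrix.mul_sub, nonsing_inv_mul _ hA]
  simp only [Matrix.mul_assoc]

theorem mul_residualVariance (hA : IsUnit A.det) (hJ : IsUnit (U * A⁻¹ * Uᵀ).det) :
    U * residualVariance A U = 0 := by
  calc U * residualVariance A U = U * (residualVariance A U * A) * A⁻¹ := by
        rw [Matrix.mul_assoc, Matrix.mul_assoc, mul_nonsing_inv _ hA, Matrix.mul_one]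
    _ = (U - U * A⁻¹ * Uᵀ * (U * A⁻¹ * Uᵀ)⁻¹ * U) * A⁻¹ := by
        rw [residualVariance_mul hA, Matrix.mul_sub, Matrix.mul_one]
        simp only [Matrix.mul_assoc]
    _ = 0 := by rw [mul_nonsing_inv _ hJ, Matrix.one_mul, sub_self, Matrix.zero_mul]

theorem residualVariance_mul_mul_of_mul_eq_zero [Fintype l] (hA : IsUnit A.det)
    {X : Matrix n l R} (hX : U * X = 0) : residualVariance A U * A * X = X := by
  rw [residualVariance_mul hA, Matrix.sub_mul, Matrix.one_mul, Matrix.mul_assoc _ U, hX,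
    Matrix.mul_zero, sub_zero]

theorem isSymm_residualVariance (hA : A.IsSymm) : (residualVariance A U).IsSymm := by
  have hA' : (A⁻¹).IsSymm := by rw [IsSymm, transpose_nonsing_inv, hA.eq]
  have hJ : (U * A⁻¹ * Uᵀ)⁻¹.IsSymm := by
    rw [IsSymm, transpose_nonsing_inv, transpose_mul, transpose_mul, transpose_transpose, hA'.eq,
      Matrix.mul_assoc]
  rw [IsSymm, residualVariance, transpose_mul, transpose_mul, hA'.eq, transpose_sub, hA.eq,
    transpose_mul, transpose_mul, transpose_transpose, hJ.eq]
  simp only [Matrix.mul_assoc]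

end ResidualVariance

end Matrix

/-- With `V_m = [[V_{m−1}, v],[vᵀ, c]]` symmetric positive definite,
`U_m = (U_{m−1}, u_m)`, `J_m = U_m V_m⁻¹ U_mᵀ` and `J_{m−1} = U_{m−1} V_{m−1}⁻¹ U_{m−1}ᵀ`
both invertible, one has
`V_m⁻¹(V_m − U_mᵀ J_m⁻¹ U_m)V_m⁻¹ ≥ [[V_{m−1}⁻¹(V_{m−1} − U_{m−1}ᵀ J_{m−1}⁻¹ U_{m−1})V_{m−1}⁻¹, 0],[0,0]]`
in the Loewner order. -/
theorem variance_monotone_cdf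
    (k p : ℕ)
    (V : Matrix (Fin k) (Fin k) ℝ) (hV : V.PosDef)
    (v : Fin k → ℝ) (c : ℝ)
    (Vm : Matrix (Fin k ⊕ Unit) (Fin k ⊕ Unit) ℝ)
    (hVm : Vm = Matrix.fromBlocks V (Matrix.of fun i (_ : Unit) => v i)
      (Matrix.of fun (_ : Unit) j => v j) (Matrix.of fun (_ : Unit) (_ : Unit) => c))
    (hVmpd : Vm.PosDef)
    (Um : Matrix (Fin p) (Fin k ⊕ Unit) ℝ)
    (hJm : IsUnit (Um * Vm⁻¹ * Umᵀ).det)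
    (hJm1 : IsUnit ((Um.submatrix id Sum.inl) * V⁻¹ * (Um.submatrix id Sum.inl)ᵀ).det) :
    (Vm⁻¹ * (Vm - Umᵀ * (Um * Vm⁻¹ * Umᵀ)⁻¹ * Um) * Vm⁻¹
      - Matrix.fromBlocks
          (V⁻¹ * (V - (Um.submatrix id Sum.inl)ᵀ
            * ((Um.submatrix id Sum.inl) * V⁻¹ * (Um.submatrix id Sum.inl)ᵀ)⁻¹
            * (Um.submatrix id Sum.inl)) * V⁻¹) 0 0 0).PosSemidef := by
  set P := residualVariance Vm Um
  set B := residualVariance V Um.toCols₁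
  set Q : Matrix (Fin k ⊕ Unit) (Fin k ⊕ Unit) ℝ := fromBlocks B 0 0 0
  change (P - Q).PosSemidef
  have hJ₁ : IsUnit (Um.toCols₁ * V⁻¹ * Um.toCols₁ᵀ).det := hJm1
  have hVdet := (isUnit_iff_isUnit_det V).mp hV.isUnit
  have hVmdet := (isUnit_iff_isUnit_det Vm).mp hVmpd.isUnit
  have hV_symm := isHermitian_iff_isSymm.mp hV.isHermitian
  have hVm_symm := isHermitian_iff_isSymm.mp hVmpd.isHermitian
  have hB : Um.toCols₁ * B = 0 := mul_residualVariance hVdet hJ₁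
  have hP_symm : P.IsSymm := isSymm_residualVariance hVm_symm
  have hQ_symm : Q.IsSymm := (isSymm_residualVariance hV_symm).fromBlocks rfl isSymm_zero
  have hUmQ : Um * Q = 0 := by rw [mul_fromBlocks_zero, hB, fromCols_zero]
  have hPQ : P * Vm * Q = Q := residualVariance_mul_mul_of_mul_eq_zero hVmdet hUmQ
  have hQP : Q * Vm * P = Q := by
    simpa only [transpose_mul, hP_symm.eq, hQ_symm.eq, hVm_symm.eq, Matrix.mul_assoc]
      using congrArg transpose hPQ
  have hPP : P * Vm * P = P :=
    residualVariance_mul_mul_of_mul_eq_zero hVmdet (mul_residualVariance hVmdet hJm)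
  have hQQ : Q * Vm * Q = Q := by
    rw [hVm, fromBlocks_zero_mul_fromBlocks_mul_fromBlocks_zero,
      residualVariance_mul_mul_of_mul_eq_zero hVdet hB]
  exact hVmpd.posSemidef.of_isHermitian_of_mul_mul_self
    (isHermitian_iff_isSymm.mpr (hP_symm.sub hQ_symm)) (sub_mul_mul_sub_eq_sub hPP hQQ hPQ hQP)
end
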